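/- Let $\{\Delta W_1, \dots, \Delta W_N\}$ be matrices in $\mathbb{R}^{d \times k}$, and let $r$ be at least the maximum of the dimension of the span of the union of all column spaces $\mathcal{C}(\Delta W_i)$ and the dimension of the span of the union of all row spaces $\mathcal{R}(\Delta W_i)$. Then there exist matrices $B \in \mathbb{R}^{d \times r}$ and $A \in \mathbb{R}^{r \times k}$ and core matrices $C_1, \dots, C_N \in \mathbb{R}^{r \times r}$ such that $\Delta W_i = B C_i A$ for all $i \in \{1, \dots, N\}$. -/

import Mathlib

open Matrix

/-- If every row of `M` lies in the span of the rows of `A` (i.e. the range of `Aᵀ.mulVecLin`),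
then `M` factors as `C * A`. -/
lemma factor_row {m n r : ℕ} (A : Matrix (Fin r) (Fin n) ℝ) (M : Matrix (Fin m) (Fin n) ℝ)
    (h : ∀ j, M j ∈ LinearMap.range Aᵀ.mulVecLin) :
    ∃ C : Matrix (Fin m) (Fin r) ℝ, M = C * A := by
  choose c hc using h
  refine ⟨Matrix.of c, ?_⟩
  ext j t
  have h1 : M j t = (Aᵀ *ᵥ c j) t := by rw [← hc j]; rfl
  simp only [Matrix.mulVec, dotProduct, Matrix.transpose_apply] at h1
  rw [h1, Matrix.mul_apply]
  exact Finset.sum_congr rfl fun l _ => (mul_comm _ _)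

/-- Given a subspace `V` of `ℝⁿ` with `finrank V ≤ r`, there is a factorization of the
identity on `V` through `ℝʳ` by matrices. -/
lemma main_aux {n : ℕ} (r : ℕ) (V : Submodule ℝ (Fin n → ℝ)) (hs : Module.finrank ℝ V ≤ r) :
    ∃ (L : Matrix (Fin n) (Fin r) ℝ) (Q : Matrix (Fin r) (Fin n) ℝ),
      ∀ v ∈ V, L *ᵥ (Q *ᵥ v) = v := by
  obtain ⟨V', hV'⟩ := Submodule.exists_isCompl V
  set s := Module.finrank ℝ V with hsdef
  let b : Module.Basis (Fin s) ℝ V := Module.finBasis ℝ V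
  let pad : (Fin s → ℝ) →ₗ[ℝ] (Fin r → ℝ) :=
    LinearMap.pi (fun j => if h : (j : ℕ) < s then LinearMap.proj ⟨j, h⟩ else 0)
  let trunc : (Fin r → ℝ) →ₗ[ℝ] (Fin s → ℝ) := LinearMap.funLeft ℝ ℝ (Fin.castLE hs)
  have htp : ∀ w : Fin s → ℝ, trunc (pad w) = w := by
    intro w
    funext j
    have hj : ((Fin.castLE hs j : Fin r) : ℕ) < s := j.isLt
    simp only [trunc, pad, LinearMap.funLeft_apply, LinearMap.pi_apply, dif_pos hj,
      LinearMap.proj_apply]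
    congr 1
  let π : (Fin n → ℝ) →ₗ[ℝ] V := Submodule.linearProjOfIsCompl V V' hV'
  let Qlin : (Fin n → ℝ) →ₗ[ℝ] (Fin r → ℝ) := pad ∘ₗ b.equivFun.toLinearMap ∘ₗ π
  let Llin : (Fin r → ℝ) →ₗ[ℝ] (Fin n → ℝ) :=
    V.subtype ∘ₗ b.equivFun.symm.toLinearMap ∘ₗ trunc
  refine ⟨LinearMap.toMatrix' Llin, LinearMap.toMatrix' Qlin, fun v hv => ?_⟩
  have hQ : (LinearMap.toMatrix' Qlin) *ᵥ v = Qlin v := by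
    rw [← Matrix.toLin'_apply, Matrix.toLin'_toMatrix']
  have hL : ∀ w, (LinearMap.toMatrix' Llin) *ᵥ w = Llin w := fun w => by
    rw [← Matrix.toLin'_apply, Matrix.toLin'_toMatrix']
  rw [hQ, hL]
  have hπ : π v = ⟨v, hv⟩ := Submodule.linearProjOfIsCompl_apply_left hV' ⟨v, hv⟩
  simp only [Qlin, Llin, LinearMap.comp_apply, hπ, LinearEquiv.coe_coe, htp,
    LinearEquiv.symm_apply_apply, Submodule.coe_subtype]

/-- Theorem 1 (NaRA expressivity): given matrices ΔW₁,…,ΔW_N in ℝ^{d×k}, if r is at least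
the dimension of the span of the union of all column spaces and at least the dimension of
the span of the union of all row spaces, then there exist shared B ∈ ℝ^{d×r}, A ∈ ℝ^{r×k}
and core matrices Cᵢ ∈ ℝ^{r×r} with ΔWᵢ = B Cᵢ A for all i. -/
theorem nara_expressivity (d k N r : ℕ) (W : Fin N → Matrix (Fin d) (Fin k) ℝ)
    (hcol : Module.finrank ℝ
      (⨆ i, LinearMap.range (W i).mulVecLin : Submodule ℝ (Fin d → ℝ)) ≤ r)
    (hrow : Module.finrank ℝ
      (⨆ i, LinearMap.range ((W i)ᵀ).mulVecLin : Submodule ℝ (Fin k → ℝ)) ≤ r) :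
    ∃ (B : Matrix (Fin d) (Fin r) ℝ) (A : Matrix (Fin r) (Fin k) ℝ)
      (C : Fin N → Matrix (Fin r) (Fin r) ℝ),
      ∀ i, W i = B * C i * A := by
  set U := (⨆ i, LinearMap.range (W i).mulVecLin : Submodule ℝ (Fin d → ℝ)) with hU
  set V := (⨆ i, LinearMap.range ((W i)ᵀ).mulVecLin : Submodule ℝ (Fin k → ℝ)) with hV
  obtain ⟨B, P, hBP⟩ := main_aux r U hcol
  obtain ⟨L, Q, hLQ⟩ := main_aux r V hrow
  -- Rows of `P * W i` lie in the row space of `Lᵀ`.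
  have hrowmem : ∀ i j, (P * W i) j ∈ LinearMap.range ((Lᵀ)ᵀ).mulVecLin := by
    intro i j
    rw [Matrix.transpose_transpose]
    have hrw : (P * W i) j = (W i)ᵀ *ᵥ (P j) := by
      funext t
      simp [Matrix.mul_apply, Matrix.mulVec, dotProduct, mul_comm]
    have hmem : (W i)ᵀ *ᵥ (P j) ∈ V := by
      have : (W i)ᵀ *ᵥ (P j) ∈ LinearMap.range ((W i)ᵀ).mulVecLin :=
        LinearMap.mem_range_self _ (P j)
      exact (le_iSup (fun i => LinearMap.range ((W i)ᵀ).mulVecLin) i) this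
    exact hrw ▸ ⟨Q *ᵥ ((W i)ᵀ *ᵥ (P j)), hLQ _ hmem⟩
  choose C hC using fun i => factor_row Lᵀ (P * W i) (hrowmem i)
  refine ⟨B, Lᵀ, C, fun i => ?_⟩
  rw [Matrix.mul_assoc, ← hC i]
  -- Now show `W i = B * (P * W i)`.
  ext x c
  have hcolmem : (fun t => W i t c) ∈ U := by
    have : (W i) *ᵥ Pi.single c 1 ∈ LinearMap.range (W i).mulVecLin :=
      LinearMap.mem_range_self _ _
    rw [Matrix.mulVec_single_one] at this
    exact (le_iSup (fun i => LinearMap.range (W i).mulVecLin) i) this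
  have hkey := hBP _ hcolmem
  have h1 : (B * (P * W i)) x c = (B *ᵥ (P *ᵥ fun t => W i t c)) x := by
    simp [Matrix.mulVec_mulVec, ← Matrix.mul_assoc, Matrix.mul_apply, Matrix.mulVec,
      dotProduct]
  rw [h1, hkey]
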